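/- arXiv:1409.0157 — 4 statements merged into one kernel-verified Lean document; each statement's English description precedes it below -/
import Mathlib

section
/- Let X be a compact metric space, f : X → X continuous and surjective, and let X̂ = lim← (X, f) be the inverse limit, realized as sequences (x_n) in X^ℕ with x_n = f(x_{n+1}) for all n, with the induced shift homeomorphism f̂((x_n)_n) = (f(x_n))_n. Then every point of X is pseudoperiodic for f if and only if every point of X̂ is pseudoperiodic for f̂. -/
private lemma chain_cascade {X : Type*} [MetricSpace X] [CompactSpace X]
    (f : X → X) (hf : Continuous f) (L : ℕ) :
    ∀ ε > 0, ∃ δ > 0, δ ≤ ε ∧ ∀ Y : ℕ → X, (∀ t, dist (f (Y t)) (Y (t + 1)) < δ) →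
      ∀ t j, j ≤ L → dist (f^[j] (Y t)) (Y (t + j)) < ε := by
  induction L with
  | zero =>
    intro ε hε
    refine ⟨ε, hε, le_refl _, fun Y hY t j hj => ?_⟩
    interval_cases j
    simpa using hε
  | succ L ih =>
    intro ε hε
    obtain ⟨η₀, hη₀, huc⟩ := Metric.uniformContinuous_iff.1
      (CompactSpace.uniformContinuous_of_continuous hf) (ε/2) (by linarith)
    have hη : 0 < min η₀ (ε/2) := lt_min hη₀ (by linarith)
    obtain ⟨δ, hδ, hδη, hchain⟩ := ih (min η₀ (ε/2)) hη
    refine ⟨δ, hδ, hδη.trans ((min_le_right _ _).trans (by linarith)), fun Y hY t j hj => ?_⟩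
    cases j with
    | zero => simpa using hε
    | succ j =>
      have hjL : j ≤ L := Nat.succ_le_succ_iff.1 hj
      have h1 : dist (f^[j] (Y t)) (Y (t + j)) < min η₀ (ε/2) := hchain Y hY t j hjL
      have h2 : dist (f (f^[j] (Y t))) (f (Y (t + j))) < ε/2 :=
        huc (h1.trans_le (min_le_left _ _))
      have h3 : dist (f (Y (t + j))) (Y (t + j + 1)) < δ := hY _
      rw [Function.iterate_succ_apply' f j (Y t), show t + (j+1) = (t + j) + 1 from by omega]
      have hδ2 : δ ≤ ε/2 := hδη.trans (min_le_right _ _)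
      calc dist (f (f^[j] (Y t))) (Y (t + j + 1))
          ≤ dist (f (f^[j] (Y t))) (f (Y (t+j))) + dist (f (Y (t+j))) (Y (t + j + 1)) :=
            dist_triangle _ _ _
        _ < ε/2 + δ := add_lt_add h2 h3
        _ ≤ ε := by linarith

/-- `x` is pseudoperiodic for `g` relative to the distance function `D`: for every
`ε > 0` there is a finite cyclic ε-pseudo-orbit starting at `x`. -/
def Pseudoperiodic {Y : Type*} (D : Y → Y → ℝ) (g : Y → Y) (x : Y) : Prop :=
  ∀ ε > 0, ∃ n : ℕ, ∃ xs : Fin (n + 1) → Y, xs 0 = x ∧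
    ∀ i : Fin (n + 1), D (g (xs i)) (xs (i + 1)) < ε

/-- Let `X` be a compact metric space with `d ≤ 1`, `f : X → X` continuous surjective,
`X̂ = lim← (X, f)` the inverse limit with metric `d̂((xₙ),(yₙ)) = Σ 2^{-n} d(xₙ, yₙ)` and
induced shift homeomorphism `f̂`.  Every point of `X` is pseudoperiodic for `f` iff every
point of `X̂` is pseudoperiodic for `f̂`. -/
theorem stmt_10 {X : Type*} [MetricSpace X] [CompactSpace X]
    (hd1 : ∀ x y : X, dist x y ≤ 1)
    (f : X → X) (hf : Continuous f) (hsurj : Function.Surjective f) :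
    (∀ x : X, Pseudoperiodic dist f x) ↔
      (∀ u : {u : ℕ → X // ∀ n, u n = f (u (n + 1))},
        Pseudoperiodic
          (fun u v : {u : ℕ → X // ∀ n, u n = f (u (n + 1))} =>
            ∑' n : ℕ, (1 / 2 : ℝ) ^ (n + 1) * dist (u.1 n) (v.1 n))
          (fun u => ⟨fun n => f (u.1 n), fun n => congrArg f (u.2 n)⟩) u) := by
  classical
  obtain ⟨g, hg⟩ := hsurj.hasRightInverse
  have hsum : ∀ a b : ℕ → X, Summable (fun k => (1/2:ℝ)^(k+1) * dist (a k) (b k)) := by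
    intro a b
    refine Summable.of_nonneg_of_le (fun k => by positivity) (fun k => ?_)
      (summable_geometric_two.mul_left (1/2))
    have h1 := hd1 (a k) (b k)
    have h0 : (0:ℝ) ≤ (1/2:ℝ)^(k+1) := by positivity
    calc (1/2:ℝ)^(k+1) * dist (a k) (b k) ≤ (1/2:ℝ)^(k+1) * 1 :=
          mul_le_mul_of_nonneg_left h1 h0
      _ = 1/2 * (1/2:ℝ)^k := by ring
  constructor
  · -- hard direction
    intro h u ε hε
    obtain ⟨M, hM⟩ := exists_pow_lt_of_lt_one (show (0:ℝ) < ε/4 by linarith)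
      (by norm_num : (1/2:ℝ) < 1)
    have hM4 : (1/2:ℝ)^(M+1) ≤ ε/4 := by
      have h0 : (0:ℝ) ≤ (1/2:ℝ)^M := by positivity
      have h1 : (1/2:ℝ)^(M+1) ≤ (1/2:ℝ)^M := by rw [pow_succ]; nlinarith
      linarith
    obtain ⟨δ, hδ, hδε, hcasc⟩ := chain_cascade f hf (M+1) (ε/8) (by linarith)
    obtain ⟨n, xs, hxs0, hxs⟩ := h (u.1 M) δ hδ
    open Fin.NatCast in set Y : ℕ → X := fun t => xs ((t : Fin (n+1))) with hY
    have hYchain : ∀ t, dist (f (Y t)) (Y (t+1)) < δ := by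
      intro t
      open Fin.NatCast in have h1 : ((t + 1 : ℕ) : Fin (n+1)) = ((t : ℕ) : Fin (n+1)) + 1 := Nat.cast_succ t
      open Fin.NatCast in have h2 := hxs ((t : Fin (n+1)))
      simpa [hY, h1] using h2
    have hC := hcasc Y hYchain
    have wprop : ∀ x : X, ∀ k, f^[M] (g^[k] x) = f (f^[M] (g^[k+1] x)) := by
      intro x k
      rw [Function.iterate_succ_apply' g k x, ← Function.iterate_succ_apply' f M,
        Function.iterate_succ_apply f M, hg]
    set w : X → {u : ℕ → X // ∀ n, u n = f (u (n + 1))} :=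
      fun x => ⟨fun k => f^[M] (g^[k] x), fun k => wprop x k⟩ with hw
    have hwcoord : ∀ x k, k ≤ M → (w x).1 k = f^[M - k] x := by
      intro x k hk
      show f^[M] (g^[k] x) = f^[M-k] x
      conv_lhs => rw [show M = (M-k)+k from by omega]
      rw [Function.iterate_add_apply]
      congr 1
      exact hg.iterate k (x)
    have hucoord : ∀ (v : {u : ℕ → X // ∀ n, u n = f (u (n + 1))}) a j,
        v.1 a = f^[j] (v.1 (a + j)) := by
      intro v a j
      induction j with
      | zero => simp
      | succ j ih =>
        rw [show a + (j+1) = a + j + 1 from by omega, Function.iterate_succ_apply f j,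
          ← v.2 (a + j)]
        exact ih
    have hukM : ∀ k, k ≤ M → u.1 k = f^[M-k] (u.1 M) := by
      intro k hk
      have h1 := hucoord u k (M - k)
      rwa [show k + (M - k) = M from by omega] at h1
    set T : Fin (n+1) → ℕ := fun i => if i = 0 then 0 else i.val with hT
    open Fin.NatCast in have hTcast : ∀ i : Fin (n+1), ((T i : ℕ) : Fin (n+1)) = i := by
      { intro i
        by_cases h' : i = 0
        · simp [hT, h']
        · simp [hT, h', Fin.cast_val_eq_self] }
    set P : Fin (n+1) → {u : ℕ → X // ∀ n, u n = f (u (n + 1))} :=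
      fun i => if i = 0 then u else w (xs i) with hP
    have hPcoord : ∀ i k, k ≤ M → (P i).1 k = f^[M-k] (Y (T i)) := by
      intro i k hk
      have hYT : Y (T i) = xs i := by
        rw [hY]
        simp only []
        rw [hTcast]
      by_cases h' : i = 0
      · subst h'
        simp only [hP, if_pos rfl]
        rw [hukM k hk, hYT, hxs0]
      · simp only [hP, if_neg h']
        rw [hYT]
        exact hwcoord (xs i) k hk
    have hshift : ∀ (i : Fin (n+1)) (s : ℕ), Y (T i + 1 + s) = Y (T (i+1) + s) := by
      intro i s
      rw [hY]
      simp only []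
      congr 1
      open Fin.NatCast in push_cast
      rw [hTcast, hTcast]
    have hedge : ∀ (i : Fin (n+1)) (k : ℕ), k ≤ M →
        dist (f ((P i).1 k)) ((P (i+1)).1 k) < 2 * (ε/8) := by
      intro i k hk
      rw [hPcoord i k hk, hPcoord (i+1) k hk, ← Function.iterate_succ_apply' f (M-k)]
      have h1 : dist (f^[M-k+1] (Y (T i))) (Y (T i + (M-k+1))) < ε/8 :=
        hC (T i) (M-k+1) (by omega)
      have h2 : dist (f^[M-k] (Y (T (i+1)))) (Y (T (i+1) + (M-k))) < ε/8 :=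
        hC (T (i+1)) (M-k) (by omega)
      have h3 : Y (T i + (M-k+1)) = Y (T (i+1) + (M-k)) := by
        rw [show T i + (M-k+1) = T i + 1 + (M-k) from by omega]
        exact hshift i (M-k)
      calc dist (f^[M-k+1] (Y (T i))) (f^[M-k] (Y (T (i+1))))
          ≤ dist (f^[M-k+1] (Y (T i))) (Y (T i + (M-k+1)))
            + dist (Y (T i + (M-k+1))) (f^[M-k] (Y (T (i+1)))) := dist_triangle _ _ _
        _ < ε/8 + ε/8 := by
            refine add_lt_add h1 ?_
            rw [h3, dist_comm]; exact h2
        _ = 2*(ε/8) := by ring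
    have htail : HasSum (fun k => if M + 1 ≤ k then (1/2:ℝ)^(k+1) else 0) ((1/2:ℝ)^(M+1)) := by
      have h1 : HasSum (fun j : ℕ => (1/2:ℝ)^(M+2) * (1/2)^j) ((1/2:ℝ)^(M+1)) := by
        have h2 := hasSum_geometric_two.mul_left ((1/2:ℝ)^(M+2))
        rwa [show (1/2:ℝ)^(M+2) * 2 = (1/2:ℝ)^(M+1) by rw [pow_succ, pow_succ]; ring] at h2
      have h2 : (fun j : ℕ => (if M + 1 ≤ j + (M+1) then (1/2:ℝ)^(j+(M+1)+1) else 0))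
          = fun j => (1/2:ℝ)^(M+2) * (1/2:ℝ)^j := by
        funext j
        rw [if_pos (by omega), show j + (M+1) + 1 = (M+2) + j from by omega, pow_add]
      have h3 := (hasSum_nat_add_iff
        (f := fun k => if M + 1 ≤ k then (1/2:ℝ)^(k+1) else 0) (M+1)).1 (h2 ▸ h1)
      have hz : ∑ i ∈ Finset.range (M+1), (if M+1 ≤ i then ((1/2:ℝ))^(i+1) else 0) = 0 :=
        Finset.sum_eq_zero (fun i hi => if_neg (by simp at hi; omega))
      rw [hz, add_zero] at h3
      exact h3
    have hbase : HasSum (fun k : ℕ => (1/2:ℝ)^(k+1) * (2*(ε/8))) (2*(ε/8)) := by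
      have heq : (fun k : ℕ => (1/2:ℝ)^(k+1) * (2*(ε/8)))
          = fun k => (1/2 * (1/2:ℝ)^k) * (2*(ε/8)) := by
        funext k; rw [pow_succ]; ring
      rw [heq]
      have hb2 := (hasSum_geometric_two.mul_left (1/2:ℝ)).mul_right (2*(ε/8))
      rwa [show (1/2:ℝ) * 2 * (2*(ε/8)) = 2*(ε/8) by ring] at hb2
    refine ⟨n, P, by simp [hP], fun i => ?_⟩
    show (∑' k : ℕ, (1/2:ℝ)^(k+1) * dist (f ((P i).1 k)) ((P (i+1)).1 k)) < ε
    have hterm : ∀ k, (1/2:ℝ)^(k+1) * dist (f ((P i).1 k)) ((P (i+1)).1 k)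
        ≤ (1/2:ℝ)^(k+1) * (2*(ε/8)) + (if M+1 ≤ k then (1/2:ℝ)^(k+1) else 0) := by
      intro k
      have hp := pow_pos (show (0:ℝ) < 1/2 by norm_num) (k+1)
      by_cases hk : k ≤ M
      · rw [if_neg (by omega), add_zero]
        have h1 := (hedge i k hk).le
        nlinarith
      · rw [if_pos (by omega)]
        have h1 := hd1 (f ((P i).1 k)) ((P (i+1)).1 k)
        nlinarith
    have hS := hbase.add htail
    have hle := Summable.tsum_le_tsum hterm (hsum _ _) hS.summable
    rw [hS.tsum_eq] at hle
    calc (∑' k : ℕ, (1/2:ℝ)^(k+1) * dist (f ((P i).1 k)) ((P (i+1)).1 k))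
        ≤ 2*(ε/8) + (1/2:ℝ)^(M+1) := hle
      _ ≤ ε/4 + ε/4 := by linarith
      _ < ε := by linarith
  · -- easy direction
    intro h x ε hε
    have hu : ∀ k, g^[k] x = f (g^[k+1] x) := by
      intro k
      rw [Function.iterate_succ_apply' g k x, hg]
    obtain ⟨n, xs, hxs0, hxs⟩ := h ⟨fun k => g^[k] x, hu⟩ (ε/2) (by linarith)
    refine ⟨n, fun i => (xs i).1 0, ?_, fun i => ?_⟩
    · show (xs 0).1 0 = x
      rw [hxs0]
      rfl
    have h1 : (∑' k : ℕ, (1/2:ℝ)^(k+1) * dist (f ((xs i).1 k)) ((xs (i+1)).1 k)) < ε/2 := hxs i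
    have h2 : (1/2:ℝ)^(0+1) * dist (f ((xs i).1 0)) ((xs (i+1)).1 0)
        ≤ ∑' k : ℕ, (1/2:ℝ)^(k+1) * dist (f ((xs i).1 k)) ((xs (i+1)).1 k) :=
      Summable.le_tsum (hsum (fun k => f ((xs i).1 k)) (fun k => (xs (i+1)).1 k)) 0
        (fun j _ => by positivity)
    have h3 : (0:ℝ) ≤ dist (f ((xs i).1 0)) ((xs (i+1)).1 0) := dist_nonneg
    show dist (f ((xs i).1 0)) ((xs (i+1)).1 0) < ε
    norm_num at h2
    linarith
end

section
/- Let X be a compact metric space with metric d ≤ 1, f : X → X continuous surjective, X̂ = lim←(X, f) with metric d̂((x_n),(y_n)) = Σ_{n≥1} 2^{-n} d(x_n, y_n), and f̂ the induced map. If every point of X̂ is pseudoperiodic for f̂, then every point of X is pseudoperiodic for f. (Key inequality: d(x₁, y₁) ≤ 2 d̂((x_n),(y_n)).) -/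
/-- Let `X` be a compact metric space with `d ≤ 1`, `f : X → X` continuous surjective,
`X̂ = lim← (X, f)` with metric `d̂((xₙ),(yₙ)) = Σ 2^{-n} d(xₙ, yₙ)` and `f̂` the induced
map.  If every point of `X̂` is pseudoperiodic for `f̂`, then every point of `X` is
pseudoperiodic for `f`. -/
theorem stmt_11 {X : Type*} [MetricSpace X] [CompactSpace X]
    (hd1 : ∀ x y : X, dist x y ≤ 1)
    (f : X → X) (hf : Continuous f) (hsurj : Function.Surjective f)
    (h : ∀ u : {u : ℕ → X // ∀ n, u n = f (u (n + 1))},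
      Pseudoperiodic
        (fun u v : {u : ℕ → X // ∀ n, u n = f (u (n + 1))} =>
          ∑' n : ℕ, (1 / 2 : ℝ) ^ (n + 1) * dist (u.1 n) (v.1 n))
        (fun u => ⟨fun n => f (u.1 n), fun n => congrArg f (u.2 n)⟩) u) :
    ∀ x : X, Pseudoperiodic dist f x := by
  intro x ε hε
  -- construct an element of the inverse limit starting at x
  let u0 : ℕ → X := fun n => Nat.rec x (fun _ y => Classical.choose (hsurj y)) n
  have hu : ∀ n, u0 n = f (u0 (n + 1)) :=
    fun n => (Classical.choose_spec (hsurj (u0 n))).symm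
  -- key inequality
  have key : ∀ a b : {u : ℕ → X // ∀ n, u n = f (u (n + 1))},
      dist (a.1 0) (b.1 0) ≤ 2 * ∑' n : ℕ, (1 / 2 : ℝ) ^ (n + 1) * dist (a.1 n) (b.1 n) := by
    intro a b
    have hs : Summable (fun n : ℕ => (1 / 2 : ℝ) * (1 / 2 : ℝ) ^ n) :=
      (summable_geometric_of_lt_one (by norm_num) (by norm_num)).mul_left _
    have hb : ∀ n : ℕ, (1 / 2 : ℝ) ^ (n + 1) * dist (a.1 n) (b.1 n) ≤ (1 / 2 : ℝ) * (1 / 2 : ℝ) ^ n := by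
      intro n
      calc (1 / 2 : ℝ) ^ (n + 1) * dist (a.1 n) (b.1 n)
          ≤ (1 / 2 : ℝ) ^ (n + 1) * 1 :=
            mul_le_mul_of_nonneg_left (hd1 _ _) (by positivity)
        _ = (1 / 2 : ℝ) * (1 / 2 : ℝ) ^ n := by ring
    have hsum : Summable (fun n : ℕ => (1 / 2 : ℝ) ^ (n + 1) * dist (a.1 n) (b.1 n)) :=
      Summable.of_nonneg_of_le (fun n => by positivity) hb hs
    have h0 := Summable.le_tsum hsum 0 (fun j _ => by positivity)
    simp only [zero_add, pow_one] at h0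
    nlinarith [h0]
  obtain ⟨n, xs, hxs0, hxs⟩ := h ⟨u0, hu⟩ (ε / 2) (by linarith)
  refine ⟨n, fun i => (xs i).1 0, by simp only [hxs0]; rfl, ?_⟩
  intro i
  have h1 := key ⟨fun m => f ((xs i).1 m), fun m => congrArg f ((xs i).2 m)⟩ (xs (i + 1))
  have h2 := hxs i
  simp only at h1 h2 ⊢
  calc dist (f ((xs i).1 0)) ((xs (i + 1)).1 0) ≤ _ := h1
    _ < 2 * (ε / 2) := by linarith
    _ = ε := by ring
end

section
/- Let S_λ be a bounded weighted shift on a directed tree with vertex set V. Then S_λ has closed range if and only if inf { ‖S_λ δ_v‖ : v ∈ V, S_λ δ_v ≠ 0 } > 0. -/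
open scoped ComplexConjugate ENNReal
set_option linter.unusedSectionVars false
set_option maxHeartbeats 1000000
set_option synthInstance.maxHeartbeats 400000

section Aux
variable {V : Type*} [Countable V] [DecidableEq V]
    (p : V → Option V) (lam : V → ℂ)
    (S : lp (fun _ : V => ℂ) 2 →L[ℂ] lp (fun _ : V => ℂ) 2)

theorem aux_hexp (x : lp (fun _ : V => ℂ) 2) :
    HasSum (fun v => x v • S (lp.single 2 v 1)) (S x) := by
  have h1 := lp.hasSum_single (E := fun _ : V => ℂ) (by norm_num) x
  have h2 : ∀ v : V, lp.single 2 v (x v) = x v • (lp.single 2 v 1 : lp (fun _ : V => ℂ) 2) := by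
    intro v
    rw [← lp.single_smul (E := fun _ : V => ℂ) 2 v (x v) (1:ℂ), smul_eq_mul, mul_one]
  rw [funext h2] at h1
  simpa using h1.mapL S

omit [Countable V] in
theorem aux_horth (hS : ∀ v w : V, S (lp.single 2 v 1) w = if p w = some v then lam w else 0)
    (v u : V) (hvu : v ≠ u) :
    (inner ℂ (S (lp.single 2 v 1)) (S (lp.single 2 u 1)) : ℂ) = 0 := by
  rw [lp.inner_eq_tsum]
  have h' : ∀ w : V, (starRingEnd ℂ) ((S (lp.single 2 v 1)) w) * (S (lp.single 2 u 1)) w = 0 := by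
    intro w
    rw [hS, hS]
    by_cases h1 : p w = some v
    · have h2 : p w ≠ some u := by
        rw [h1]; simpa using fun h => hvu (Option.some_injective _ h)
      simp [h2]
    · simp [h1]
  simp [RCLike.inner_apply, h', mul_comm ((S (lp.single 2 u 1)) _)]

theorem aux_hinner (hS : ∀ v w : V, S (lp.single 2 v 1) w = if p w = some v then lam w else 0)
    (v : V) (x : lp (fun _ : V => ℂ) 2) :
    (inner ℂ (S (lp.single 2 v 1)) (S x) : ℂ) = x v * (‖S (lp.single 2 v 1)‖ : ℂ) ^ 2 := by
  have h1 := (aux_hexp S x).mapL (innerSL ℂ (S (lp.single 2 v 1)))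
  have h2 : (fun u => innerSL ℂ (S (lp.single 2 v 1)) (x u • S (lp.single 2 u 1)))
      = fun u => if u = v then x v * (‖S (lp.single 2 v 1)‖ : ℂ) ^ 2 else 0 := by
    funext u
    rw [innerSL_apply_apply, inner_smul_right]
    by_cases h : u = v
    · subst h; rw [inner_self_eq_norm_sq_to_K]; simp
    · rw [aux_horth p lam S hS v u (Ne.symm h), mul_zero, if_neg h]
  rw [h2] at h1
  exact h1.unique (hasSum_ite_eq v _)

theorem aux_hnormsq (hS : ∀ v w : V, S (lp.single 2 v 1) w = if p w = some v then lam w else 0)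
    (x : lp (fun _ : V => ℂ) 2) :
    HasSum (fun v => ‖x v‖ ^ 2 * ‖S (lp.single 2 v 1)‖ ^ 2) (‖S x‖ ^ 2) := by
  have h1 := (aux_hexp S x).mapL (innerSL ℂ (S x))
  have h2 : (fun v => innerSL ℂ (S x) (x v • S (lp.single 2 v 1)))
      = fun v => ((‖x v‖ ^ 2 * ‖S (lp.single 2 v 1)‖ ^ 2 : ℝ) : ℂ) := by
    funext v
    rw [innerSL_apply_apply, inner_smul_right, ← inner_conj_symm, aux_hinner p lam S hS v x]
    rw [map_mul, ← Complex.ofReal_pow, Complex.conj_ofReal, ← mul_assoc, Complex.mul_conj']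
    push_cast
    ring
  rw [h2] at h1
  have h3 : (innerSL ℂ (S x)) (S x) = ((‖S x‖ ^ 2 : ℝ) : ℂ) := by
    rw [innerSL_apply_apply, inner_self_eq_norm_sq_to_K]; exact (Complex.ofReal_pow _ _).symm ▸ rfl
  rw [h3] at h1
  exact Complex.hasSum_ofReal.mp h1

omit [Countable V] [DecidableEq V] in
theorem aux_hxnorm (x : lp (fun _ : V => ℂ) 2) :
    HasSum (fun v => ‖x v‖ ^ 2) (‖x‖ ^ 2) := by
  have h := lp.hasSum_norm (E := fun _ : V => ℂ) (p := 2) (by norm_num) x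
  have h2 : ∀ r : ℝ, r ^ (2 : ℝ≥0∞).toReal = r ^ 2 := by
    intro r
    rw [show (2 : ℝ≥0∞).toReal = ((2:ℕ):ℝ) by norm_num, Real.rpow_natCast]
  simpa [h2] using h

end Aux

/-- A bounded weighted shift `S_λ` on a directed tree has closed range iff
`inf { ‖S δ_v‖ : v ∈ V, S δ_v ≠ 0 } > 0`. -/
theorem stmt_16 {V : Type*} [Countable V] [DecidableEq V]
    (p : V → Option V) (lam : V → ℂ)
    (S : lp (fun _ : V => ℂ) 2 →L[ℂ] lp (fun _ : V => ℂ) 2)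
    (hS : ∀ v w : V, S (lp.single 2 v 1) w = if p w = some v then lam w else 0) :
    IsClosed (Set.range S) ↔
      ∃ ε > 0, ∀ v : V, S (lp.single 2 v 1) ≠ 0 → ε ≤ ‖S (lp.single 2 v 1)‖ := by
  classical
  constructor
  · -- closed range implies bound
    intro hcl
    have hK : IsClosed ((LinearMap.range (S : lp (fun _ : V => ℂ) 2 →ₗ[ℂ] lp (fun _ : V => ℂ) 2) : Submodule ℂ (lp (fun _ : V => ℂ) 2)) :
        Set (lp (fun _ : V => ℂ) 2)) := by
      rwa [LinearMap.coe_range]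
    haveI : CompleteSpace (LinearMap.range (S : lp (fun _ : V => ℂ) 2 →ₗ[ℂ] lp (fun _ : V => ℂ) 2)) := hK.completeSpace_coe
    set T := S.codRestrict (LinearMap.range (S : lp (fun _ : V => ℂ) 2 →ₗ[ℂ] lp (fun _ : V => ℂ) 2)) (fun x => LinearMap.mem_range_self (S : lp (fun _ : V => ℂ) 2 →ₗ[ℂ] lp (fun _ : V => ℂ) 2) x) with hT
    have hsurj : Function.Surjective T := by
      rintro ⟨y, hy⟩
      obtain ⟨x, hx⟩ := hy
      exact ⟨x, Subtype.ext hx⟩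
    obtain ⟨C, C0, hC⟩ := T.exists_preimage_norm_le hsurj
    refine ⟨C⁻¹, inv_pos.mpr C0, ?_⟩
    intro v hv
    obtain ⟨x, hx, hxn⟩ := hC ⟨S (lp.single 2 v 1), LinearMap.mem_range_self (S : lp (fun _ : V => ℂ) 2 →ₗ[ℂ] lp (fun _ : V => ℂ) 2) _⟩
    have hSx : S x = S (lp.single 2 v 1) := congrArg Subtype.val hx
    have hnpos : (0 : ℝ) < ‖S (lp.single 2 v 1)‖ := norm_pos_iff.mpr hv
    have h1 : x v * (‖S (lp.single 2 v 1)‖ : ℂ) ^ 2 = (‖S (lp.single 2 v 1)‖ : ℂ) ^ 2 := by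
      have h := aux_hinner p lam S hS v x
      rw [hSx, inner_self_eq_norm_sq_to_K] at h
      exact h.symm
    have h2 : ((‖S (lp.single 2 v 1)‖ : ℂ)) ^ 2 ≠ 0 :=
      pow_ne_zero _ (by exact_mod_cast hnpos.ne')
    have hxv : x v = 1 := by
      have := mul_right_cancel₀ h2 (h1.trans (one_mul _).symm)
      simpa using this
    have hle1 : (1 : ℝ) ≤ ‖x‖ := by
      have h := lp.norm_apply_le_norm (E := fun _ : V => ℂ) (p := 2) (by norm_num) x v
      rw [hxv] at h
      simpa using h
    have hle2 : ‖x‖ ≤ C * ‖S (lp.single 2 v 1)‖ := hxn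
    calc C⁻¹ = C⁻¹ * 1 := (mul_one _).symm
      _ ≤ C⁻¹ * (C * ‖S (lp.single 2 v 1)‖) :=
          mul_le_mul_of_nonneg_left (hle1.trans hle2) (inv_pos.mpr C0).le
      _ = ‖S (lp.single 2 v 1)‖ := by field_simp
  · -- bound implies closed range
    rintro ⟨ε, hε, hbound⟩
    have key : ∀ x : lp (fun _ : V => ℂ) 2, (∀ v, S (lp.single 2 v 1) = 0 → x v = 0) →
        ε * ‖x‖ ≤ ‖S x‖ := by
      intro x hx
      have h1 := aux_hnormsq p lam S hS x
      have h2 := (aux_hxnorm x).mul_left (ε ^ 2)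
      have hle : ε ^ 2 * ‖x‖ ^ 2 ≤ ‖S x‖ ^ 2 := by
        refine hasSum_le (fun v => ?_) h2 h1
        by_cases h : S (lp.single 2 v 1) = 0
        · simp [hx v h]
        · have hb := hbound v h
          have hsq : ε ^ 2 ≤ ‖S (lp.single 2 v 1)‖ ^ 2 := pow_le_pow_left₀ hε.le hb 2
          nlinarith [sq_nonneg ‖x v‖]
      nlinarith [norm_nonneg (S x), mul_nonneg hε.le (norm_nonneg x)]
    have proj : ∀ x : lp (fun _ : V => ℂ) 2, ∃ x' : lp (fun _ : V => ℂ) 2,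
        (∀ v, S (lp.single 2 v 1) = 0 → x' v = 0) ∧ S x' = S x := by
      intro x
      set g : V → ℂ := fun v => if S (lp.single 2 v 1) = 0 then 0 else x v with hg
      have hxsum : Summable fun v => ‖x v‖ ^ (2 : ℝ≥0∞).toReal :=
        (memℓp_gen_iff (by norm_num)).mp (lp.memℓp x)
      have hmem : Memℓp g 2 := by
        refine (memℓp_gen_iff (by norm_num)).mpr ?_
        refine hxsum.of_nonneg_of_le (fun v => by positivity) (fun v => ?_)
        refine Real.rpow_le_rpow (norm_nonneg _) ?_ (by norm_num)
        rw [hg]; dsimp only; split <;> simp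
      refine ⟨⟨g, hmem⟩, fun v hv => by show g v = 0; rw [hg]; simp [hv], ?_⟩
      have h1 := aux_hexp S (⟨g, hmem⟩ : lp (fun _ : V => ℂ) 2)
      have h2 : (fun v => (⟨g, hmem⟩ : lp (fun _ : V => ℂ) 2) v • S (lp.single 2 v 1))
          = fun v => x v • S (lp.single 2 v 1) := by
        funext v
        by_cases h : S (lp.single 2 v 1) = 0
        · simp [h]
        · have : (⟨g, hmem⟩ : lp (fun _ : V => ℂ) 2) v = x v := by show g v = x v; rw [hg]; simp [h]
          rw [this]
      rw [h2] at h1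
      exact h1.unique (aux_hexp S x)
    apply IsSeqClosed.isClosed
    intro y ylim hy hlim
    have hch : ∀ n : ℕ, ∃ x' : lp (fun _ : V => ℂ) 2,
        (∀ v, S (lp.single 2 v 1) = 0 → x' v = 0) ∧ S x' = y n := by
      intro n
      obtain ⟨z, hz⟩ := hy n
      obtain ⟨x', hx1, hx2⟩ := proj z
      exact ⟨x', hx1, hx2.trans hz⟩
    choose u hu1 hu2 using hch
    have hyc : CauchySeq y := hlim.cauchySeq
    have huc : CauchySeq u := by
      rw [Metric.cauchySeq_iff] at hyc ⊢
      intro d hd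
      obtain ⟨N, hN⟩ := hyc (ε * d) (by positivity)
      refine ⟨N, fun m hm n hn => ?_⟩
      have hmn : ∀ v, S (lp.single 2 v 1) = 0 → (u m - u n) v = 0 := by
        intro v hv
        have hsub : (u m - u n) v = u m v - u n v := by
          rw [lp.coeFn_sub]; rfl
        rw [hsub, hu1 m v hv, hu1 n v hv, sub_zero]
      have hk := key (u m - u n) hmn
      rw [map_sub, hu2 m, hu2 n] at hk
      have hyd := hN m hm n hn
      rw [dist_eq_norm] at hyd ⊢
      nlinarith [norm_nonneg (u m - u n)]
    haveI : CompleteSpace (lp (fun _ : V => ℂ) 2) := lp.completeSpace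
    obtain ⟨x, hx⟩ := cauchySeq_tendsto_of_complete huc
    have hcomp : Filter.Tendsto (fun n => S (u n)) Filter.atTop (nhds (S x)) :=
      (S.continuous.tendsto x).comp hx
    have : Filter.Tendsto y Filter.atTop (nhds (S x)) := by
      simpa [Function.comp, hu2] using hcomp
    exact ⟨x, (tendsto_nhds_unique hlim this).symm⟩
end

section
/- Let E = (E⁰, E¹, r, s) be a topological graph (r, s : E¹ → E⁰ continuous, s a local homeomorphism). For ξ, η ∈ C_c(E¹), the function ⟨ξ, η⟩ : E⁰ → ℂ defined by ⟨ξ, η⟩(v) = Σ_{e ∈ s⁻¹(v)} conj(ξ(e)) η(e) is well-defined (the sum is finite) and continuous. -/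
open Set Function

/-- The fiber of a local homeomorphism intersected with a compact set is finite. -/
lemma fiber_inter_compact_finite' {E0 E1 : Type*} [TopologicalSpace E0] [TopologicalSpace E1]
    [T1Space E0] {s : E1 → E0} (hs : IsLocalHomeomorph s) (v : E0) {K : Set E1}
    (hK : IsCompact K) : (s ⁻¹' {v} ∩ K).Finite := by
  have hC : IsCompact (s ⁻¹' {v} ∩ K) :=
    hK.inter_left (isClosed_singleton.preimage hs.continuous)
  choose e hmem heq using hs
  obtain ⟨t, hts, hcov⟩ := hC.elim_nhds_subcover (fun x => (e x).source)
    (fun x _ => ((e x).open_source.mem_nhds (hmem x)))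
  refine t.finite_toSet.subset ?_
  intro y hy
  obtain ⟨x, hxt, hyx⟩ := Set.mem_iUnion₂.mp (hcov hy)
  have h1 : (e x) y = v := by rw [← heq x]; exact hy.1
  have h2 : (e x) x = v := by rw [← heq x]; exact (hts x hxt).1
  have : y = x := (e x).injOn hyx (hmem x) (h1.trans h2.symm)
  rw [this]; exact hxt

/-- If `g` is supported in the source of a chart of `s`, the fiber-sum is continuous. -/
lemma key_chart' {E0 E1 : Type*} [TopologicalSpace E0] [TopologicalSpace E1] [T2Space E0]
    {s : E1 → E0} (hscont : Continuous s)
    (e : OpenPartialHomeomorph E1 E0) (hse : s = ⇑e)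
    (g : E1 → ℂ) (hg : Continuous g) (hgc : HasCompactSupport g)
    (hsup : tsupport g ⊆ e.source) :
    Continuous fun v : E0 => ∑ᶠ x ∈ s ⁻¹' {v}, g x := by
  have hval : ∀ w ∈ e.target, (∑ᶠ x ∈ s ⁻¹' {w}, g x) = g (e.symm w) := by
    intro w hw
    have hsubkey : ∀ x, x ∈ s ⁻¹' {w} → g x ≠ 0 → x = e.symm w := by
      intro x hx hgx
      have hxs : x ∈ e.source := hsup (subset_tsupport g hgx)
      have : (e : E1 → E0) x = w := by rw [← hse]; exact hx
      exact (OpenPartialHomeomorph.eq_symm_apply e hxs hw).mpr this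
    by_cases hz : g (e.symm w) = 0
    · rw [hz]
      refine finsum_mem_of_eqOn_zero ?_
      intro x hx
      by_contra hgx
      exact hgx (by rw [hsubkey x hx hgx]; exact hz)
    · have hset : s ⁻¹' {w} ∩ support g = {e.symm w} := by
        apply Set.Subset.antisymm
        · rintro x ⟨hx1, hx2⟩; exact hsubkey x hx1 hx2
        · rintro x rfl
          refine ⟨?_, hz⟩
          show s (e.symm w) = w
          rw [hse]; exact e.right_inv hw
      rw [← finsum_mem_inter_support, hset, finsum_mem_singleton]
  have himg : IsCompact (s '' tsupport g) := hgc.image hscont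
  rw [continuous_iff_continuousAt]
  intro v
  by_cases hv : v ∈ s '' tsupport g
  · have hvt : v ∈ e.target := by
      obtain ⟨x, hx, rfl⟩ := hv
      rw [hse]; exact e.map_source (hsup hx)
    have hev : (fun w : E0 => ∑ᶠ x ∈ s ⁻¹' {w}, g x) =ᶠ[nhds v] fun w => g (e.symm w) :=
      Filter.eventually_of_mem (e.open_target.mem_nhds hvt) hval
    exact (continuousAt_congr hev).mpr (hg.continuousAt.comp (e.continuousAt_symm hvt))
  · have hopen : IsOpen (s '' tsupport g)ᶜ := himg.isClosed.isOpen_compl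
    have hev : (fun w : E0 => ∑ᶠ x ∈ s ⁻¹' {w}, g x) =ᶠ[nhds v] fun _ => (0 : ℂ) := by
      refine Filter.eventually_of_mem (hopen.mem_nhds hv) ?_
      intro w hw
      refine finsum_mem_of_eqOn_zero ?_
      intro x hx
      by_contra hgx
      exact hw ⟨x, subset_tsupport g hgx, hx⟩
    exact (continuousAt_congr hev).mpr continuousAt_const

lemma finsum_mem_finset_sum' {α ι : Type*} {S : Set α} (t : Finset ι) (g : ι → α → ℂ)
    (h : ∀ i, (S ∩ support (g i)).Finite) :
    ∑ᶠ x ∈ S, ∑ i ∈ t, g i x = ∑ i ∈ t, ∑ᶠ x ∈ S, g i x := by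
  classical
  induction t using Finset.induction with
  | empty => simp
  | @insert a t' hnot ih =>
    have hfin : (S ∩ support fun x => ∑ i ∈ t', g i x).Finite := by
      refine Set.Finite.subset (Set.Finite.biUnion t'.finite_toSet fun i _ => h i) ?_
      rintro x ⟨hxS, hxsup⟩
      obtain ⟨i, hit, hgi⟩ : ∃ i ∈ t', g i x ≠ 0 := by
        by_contra hcon
        push_neg at hcon
        exact hxsup (Finset.sum_eq_zero hcon)
      exact Set.mem_biUnion hit ⟨hxS, hgi⟩
    have : ∑ᶠ x ∈ S, ∑ i ∈ insert a t', g i x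
        = ∑ᶠ x ∈ S, (g a x + ∑ i ∈ t', g i x) :=
      finsum_mem_congr rfl fun x _ => Finset.sum_insert hnot
    rw [this, finsum_mem_add_distrib' (h a) hfin, Finset.sum_insert hnot, ih]

/-- For a topological graph `E` and `ξ, η ∈ C_c(E¹)`, the function
`⟨ξ, η⟩(v) = Σ_{e ∈ s⁻¹(v)} conj(ξ(e)) η(e)` is well defined (the sum has finite
support) and continuous on `E⁰`. -/
theorem stmt_19 {E0 E1 : Type*} [TopologicalSpace E0] [TopologicalSpace E1]
    [LocallyCompactSpace E0] [LocallyCompactSpace E1] [T2Space E0] [T2Space E1]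
    [SecondCountableTopology E0] [SecondCountableTopology E1]
    (r s : E1 → E0) (hr : Continuous r) (hs : IsLocalHomeomorph s)
    (ξ η : E1 → ℂ) (hξ : Continuous ξ) (hξc : HasCompactSupport ξ)
    (hη : Continuous η) (hηc : HasCompactSupport η) :
    (∀ v : E0,
      (s ⁻¹' {v} ∩ Function.support fun e => (starRingEnd ℂ) (ξ e) * η e).Finite) ∧
    Continuous fun v : E0 => ∑ᶠ e ∈ s ⁻¹' {v}, (starRingEnd ℂ) (ξ e) * η e := by
  classical
  set f : E1 → ℂ := fun e => (starRingEnd ℂ) (ξ e) * η e with hfdef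
  have hf : Continuous f := ((Complex.continuous_conj.comp hξ)).mul hη
  have hfc : HasCompactSupport f := by
    have h1 : HasCompactSupport fun e => (starRingEnd ℂ) (ξ e) :=
      hξc.comp_left (map_zero _)
    exact h1.mul_right
  have hK : IsCompact (tsupport f) := hfc
  -- Part 1
  have hfin : ∀ v : E0, (s ⁻¹' {v} ∩ support f).Finite := fun v =>
    (fiber_inter_compact_finite' hs v hK).subset
      (Set.inter_subset_inter_right _ (subset_tsupport f))
  refine ⟨hfin, ?_⟩
  have hscont : Continuous s := hs.continuous
  -- Part 2: cover the support by finitely many chart sources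
  choose e hmem heq using hs
  obtain ⟨t, _hts, hcov⟩ := hK.elim_nhds_subcover (fun x => (e x).source)
    (fun x _ => ((e x).open_source.mem_nhds (hmem x)))
  set n := t.card with hn
  set ch : Fin n → OpenPartialHomeomorph E1 E0 := fun i => e ((t.equivFin.symm i) : E1) with hch
  have hcov' : tsupport f ⊆ ⋃ i : Fin n, (ch i).source := by
    intro x hx
    obtain ⟨y, hyt, hxy⟩ := Set.mem_iUnion₂.mp (hcov hx)
    refine Set.mem_iUnion.mpr ⟨t.equivFin ⟨y, hyt⟩, ?_⟩
    show x ∈ (e ((t.equivFin.symm (t.equivFin ⟨y, hyt⟩)) : E1)).source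
    rw [Equiv.symm_apply_apply]
    exact hxy
  obtain ⟨φ, hφsub, hφone, _hφmem, hφc⟩ :=
    exists_continuous_sum_one_of_isOpen_isCompact
      (fun i : Fin n => (ch i).open_source) hK hcov'
  set g : Fin n → E1 → ℂ := fun i x => ((φ i x : ℝ) : ℂ) * f x with hg
  have hgcont : ∀ i, Continuous (g i) := fun i =>
    (Complex.continuous_ofReal.comp (φ i).continuous).mul hf
  have hgc : ∀ i, HasCompactSupport (g i) := fun i =>
    (((hφc i).comp_left (g := Complex.ofReal) Complex.ofReal_zero).mul_right)
  have hgsup : ∀ i, tsupport (g i) ⊆ (ch i).source := by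
    intro i
    refine Set.Subset.trans ?_ (hφsub i)
    refine closure_mono ?_
    intro x hx
    simp only [g, mem_support, ne_eq] at hx
    intro hzero
    exact hx (by simp [hzero])
  have hgfin : ∀ i (v : E0), (s ⁻¹' {v} ∩ support (g i)).Finite := fun i v =>
    (fiber_inter_compact_finite' (fun x => ⟨e x, hmem x, heq x⟩) v (hgc i)).subset
      (Set.inter_subset_inter_right _ (subset_tsupport (g i)))
  -- pointwise decomposition
  have hdecomp : ∀ x : E1, f x = ∑ i : Fin n, g i x := by
    intro x
    have : ∑ i : Fin n, g i x = ((∑ i : Fin n, φ i x : ℝ) : ℂ) * f x := by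
      push_cast
      rw [Finset.sum_mul]
    rw [this]
    by_cases hx : x ∈ tsupport f
    · have h1 : (∑ i : Fin n, φ i) x = 1 := by simpa using hφone hx
      simp only [Finset.sum_apply, ContinuousMap.coe_sum] at h1 ⊢
      rw [h1]; simp
    · have : f x = 0 := image_eq_zero_of_notMem_tsupport hx
      rw [this, mul_zero]
  -- exchange sums
  have hexch : (fun v : E0 => ∑ᶠ x ∈ s ⁻¹' {v}, f x)
      = fun v : E0 => ∑ i : Fin n, ∑ᶠ x ∈ s ⁻¹' {v}, g i x := by
    funext v
    rw [finsum_mem_congr rfl fun x _ => hdecomp x]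
    exact finsum_mem_finset_sum' Finset.univ g fun i => hgfin i v
  show Continuous fun v : E0 => ∑ᶠ x ∈ s ⁻¹' {v}, f x
  rw [hexch]
  exact continuous_finset_sum _ fun i _ =>
    key_chart' hscont (ch i) (heq _) (g i) (hgcont i) (hgc i) (hgsup i)
end
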